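/- arXiv:2605.00160 — 3 statements merged into one kernel-verified Lean document; each statement's English description precedes it below -/
import Mathlib

section
/- Let T be a Markov kernel from X to X satisfying a two-sided density bound: there exist a nonnegative measure λ on X and ε > 0 such that ε·λ(A) ≤ T(A|x) ≤ (1/ε)·λ(A) for all measurable A and all x ∈ X. Then for any two probability measures μ, ν on X, the pushforwards Tμ and Tν are mutually absolutely continuous, and moreover for any measurable A with λ(A)>0, (Tμ)(A)/(Tν)(A) ∈ [ε², ε^{-2}]; hence the Hilbert distance h(Tμ, Tν) ≤ 4·log(1/ε). -/
open MeasureTheory ProbabilityTheory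
open scoped ENNReal

/-- The set of ratios `μ(A)/ν(A)` over measurable sets `A` with `ν(A) > 0`. -/
def ratioSet {X : Type*} [MeasurableSpace X] (μ ν : Measure X) : Set ℝ :=
  {r : ℝ | ∃ A : Set X, MeasurableSet A ∧ 0 < ν A ∧ r = (μ A).toReal / (ν A).toReal}

/-- Hilbert projective distance `h(μ,ν) = log (sup_A μ(A)/ν(A) · sup_A ν(A)/μ(A))`. -/
noncomputable def hilbertDist {X : Type*} [MeasurableSpace X]
    (μ ν : Measure X) : ℝ :=
  Real.log (sSup (ratioSet μ ν) * sSup (ratioSet ν μ))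

/-!
The two-sided bound `ε • λ ≤ T x ≤ ε⁻¹ • λ` survives averaging over `x`, so every `Tρ` is
sandwiched between `ε • λ` and `ε⁻¹ • λ`. Two measures in the same sandwich are comparable up
to the factor `ε⁻²` in both directions, which gives mutual absolute continuity and bounds both
suprema in the Hilbert distance by `ε⁻²`.
-/

namespace MeasureTheory.Measure

variable {X Y : Type*} [MeasurableSpace X] [MeasurableSpace Y]

section Bind

variable {κ : Kernel X Y} {ρ : Measure X} [IsProbabilityMeasure ρ] {μ : Measure Y}

lemma le_bind_of_forall_le (h : ∀ x, μ ≤ κ x) : μ ≤ ρ.bind κ := by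
  refine Measure.le_iff.2 fun A hA => ?_
  rw [bind_apply hA κ.measurable.aemeasurable]
  calc μ A = ∫⁻ _, μ A ∂ρ := by simp
    _ ≤ ∫⁻ x, κ x A ∂ρ := lintegral_mono fun x => h x A

lemma bind_le_of_forall_le (h : ∀ x, κ x ≤ μ) : ρ.bind κ ≤ μ := by
  refine Measure.le_iff.2 fun A hA => ?_
  rw [bind_apply hA κ.measurable.aemeasurable]
  calc ∫⁻ x, κ x A ∂ρ ≤ ∫⁻ _, μ A ∂ρ := lintegral_mono fun x => h x A
    _ = μ A := by simp

end Bind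

section Sandwich

variable {lam α β : Measure X} {ε : ℝ≥0∞}

lemma le_inv_sq_smul_of_sandwich (hε0 : ε ≠ 0) (hε : ε ≠ ∞)
    (hα : α ≤ ε⁻¹ • lam) (hβ : ε • lam ≤ β) : α ≤ ε⁻¹ ^ 2 • β :=
  calc α ≤ ε⁻¹ • lam := hα
    _ = ε⁻¹ ^ 2 • ε • lam := by
      rw [smul_smul, pow_two, mul_assoc, ENNReal.inv_mul_cancel hε0 hε, mul_one]
    _ ≤ ε⁻¹ ^ 2 • β := by gcongr

lemma sq_smul_le_of_sandwich (hε0 : ε ≠ 0) (hε : ε ≠ ∞)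
    (hβ : β ≤ ε⁻¹ • lam) (hα : ε • lam ≤ α) : ε ^ 2 • β ≤ α :=
  calc ε ^ 2 • β ≤ ε ^ 2 • ε⁻¹ • lam := by gcongr
    _ = ε • lam := by
      rw [smul_smul, pow_two, mul_assoc, ENNReal.mul_inv_cancel hε0 hε, mul_one]
    _ ≤ α := hα

end Sandwich

end MeasureTheory.Measure

section HilbertDist

variable {X : Type*} [MeasurableSpace X] {α β : Measure X} {C : ℝ≥0∞}

lemma one_mem_ratioSet [IsProbabilityMeasure α] [IsProbabilityMeasure β] :
    (1 : ℝ) ∈ ratioSet α β :=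
  ⟨Set.univ, MeasurableSet.univ, by simp, by simp⟩

lemma le_toReal_of_mem_ratioSet [IsFiniteMeasure β] (hC : C ≠ ∞) (hαβ : α ≤ C • β) {r : ℝ}
    (hr : r ∈ ratioSet α β) : r ≤ C.toReal := by
  obtain ⟨A, hA, hβA, rfl⟩ := hr
  have hβA' : 0 < (β A).toReal := ENNReal.toReal_pos hβA.ne' (measure_ne_top β A)
  rw [div_le_iff₀ hβA', ← ENNReal.toReal_mul]
  exact ENNReal.toReal_mono (ENNReal.mul_ne_top hC (measure_ne_top β A)) (hαβ A)

lemma sSup_ratioSet_mem_Icc [IsProbabilityMeasure α] [IsProbabilityMeasure β] (hC : C ≠ ∞)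
    (hαβ : α ≤ C • β) : sSup (ratioSet α β) ∈ Set.Icc 1 C.toReal :=
  ⟨le_csSup ⟨C.toReal, fun _ => le_toReal_of_mem_ratioSet hC hαβ⟩ one_mem_ratioSet,
    csSup_le ⟨1, one_mem_ratioSet⟩ fun _ => le_toReal_of_mem_ratioSet hC hαβ⟩

lemma hilbertDist_le_two_mul_log [IsProbabilityMeasure α] [IsProbabilityMeasure β]
    (hC : C ≠ ∞) (hαβ : α ≤ C • β) (hβα : β ≤ C • α) :
    hilbertDist α β ≤ 2 * Real.log C.toReal := by
  obtain ⟨h₁, h₁'⟩ := sSup_ratioSet_mem_Icc hC hαβ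
  obtain ⟨h₂, h₂'⟩ := sSup_ratioSet_mem_Icc hC hβα
  calc hilbertDist α β ≤ Real.log (C.toReal * C.toReal) :=
        Real.log_le_log (by positivity) (mul_le_mul h₁' h₂' (by positivity) (by positivity))
    _ = 2 * Real.log C.toReal := by rw [← pow_two, Real.log_pow]; norm_num

end HilbertDist

theorem stmt_9_general {X : Type*} [MeasurableSpace X]
    (lam : Measure X)
    (ε : ℝ≥0∞) (hε0 : 0 < ε) (hε1 : ε ≤ 1)
    (T : Kernel X X) [IsMarkovKernel T]
    (hlow : ∀ x : X, ∀ A : Set X, MeasurableSet A → ε * lam A ≤ T x A)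
    (hupp : ∀ x : X, ∀ A : Set X, MeasurableSet A → T x A ≤ ε⁻¹ * lam A)
    (μ ν : Measure X) [IsProbabilityMeasure μ] [IsProbabilityMeasure ν] :
    (μ.bind (fun x => T x)) ≪ (ν.bind (fun x => T x)) ∧
    (ν.bind (fun x => T x)) ≪ (μ.bind (fun x => T x)) ∧
    (∀ A : Set X, MeasurableSet A → 0 < lam A →
      ε ^ 2 * (ν.bind (fun x => T x)) A ≤ (μ.bind (fun x => T x)) A ∧
      (μ.bind (fun x => T x)) A ≤ ε⁻¹ ^ 2 * (ν.bind (fun x => T x)) A) ∧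
    hilbertDist (μ.bind (fun x => T x)) (ν.bind (fun x => T x)) ≤
      4 * Real.log (1 / ε.toReal) := by
  have hε_ne_zero : ε ≠ 0 := hε0.ne'
  have hε_ne_top : ε ≠ ∞ := ne_top_of_le_ne_top ENNReal.one_ne_top hε1
  have sandwich (ρ : Measure X) [IsProbabilityMeasure ρ] :
      ε • lam ≤ ρ.bind T ∧ ρ.bind T ≤ ε⁻¹ • lam :=
    ⟨Measure.le_bind_of_forall_le fun x => Measure.le_iff.2 (hlow x),
      Measure.bind_le_of_forall_le fun x => Measure.le_iff.2 (hupp x)⟩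
  have hμν := Measure.le_inv_sq_smul_of_sandwich hε_ne_zero hε_ne_top
    (sandwich μ).2 (sandwich ν).1
  have hνμ := Measure.le_inv_sq_smul_of_sandwich hε_ne_zero hε_ne_top
    (sandwich ν).2 (sandwich μ).1
  refine ⟨Measure.absolutelyContinuous_of_le_smul hμν,
    Measure.absolutelyContinuous_of_le_smul hνμ, fun A _ _ => ⟨?_, hμν A⟩, ?_⟩
  · exact Measure.sq_smul_le_of_sandwich hε_ne_zero hε_ne_top (sandwich ν).2 (sandwich μ).1 A
  · calc _ ≤ 2 * Real.log (ε⁻¹ ^ 2).toReal :=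
          hilbertDist_le_two_mul_log (by simpa using hε_ne_zero) hμν hνμ
      _ = 4 * Real.log (1 / ε.toReal) := by
        rw [ENNReal.toReal_pow, ENNReal.toReal_inv, Real.log_pow, one_div]; ring

theorem stmt_9 {X : Type*} [MeasurableSpace X]
    (lam : Measure X) [SigmaFinite lam] (hlam : 0 < lam Set.univ)
    (ε : ℝ≥0∞) (hε0 : 0 < ε) (hε1 : ε ≤ 1)
    (T : Kernel X X) [IsMarkovKernel T]
    (hlow : ∀ x : X, ∀ A : Set X, MeasurableSet A → ε * lam A ≤ T x A)
    (hupp : ∀ x : X, ∀ A : Set X, MeasurableSet A → T x A ≤ ε⁻¹ * lam A)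
    (μ ν : Measure X) [IsProbabilityMeasure μ] [IsProbabilityMeasure ν] :
    (μ.bind (fun x => T x)) ≪ (ν.bind (fun x => T x)) ∧
    (ν.bind (fun x => T x)) ≪ (μ.bind (fun x => T x)) ∧
    (∀ A : Set X, MeasurableSet A → 0 < lam A →
      ε ^ 2 * (ν.bind (fun x => T x)) A ≤ (μ.bind (fun x => T x)) A ∧
      (μ.bind (fun x => T x)) A ≤ ε⁻¹ ^ 2 * (ν.bind (fun x => T x)) A) ∧
    hilbertDist (μ.bind (fun x => T x)) (ν.bind (fun x => T x)) ≤
      4 * Real.log (1 / ε.toReal) :=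
  stmt_9_general lam ε hε0 hε1 T hlow hupp μ ν
end

section
/- Consider the Bayesian filter update: given a prior μ on X and a measurement density h(·,y) ≥ 0, the posterior is μ^y(dx) = h(x,y)μ(dx)/α_μ(y) where α_μ(y) = ∫h(x,y)μ(dx) > 0. Then the expected (under the true output distribution with density α_μ with respect to ψ) total variation distance between posteriors from prior μ and prior ν satisfies: ∫ ‖μ^y − ν^y‖_TV α_μ(y) ψ(dy) ≤ ‖μ−ν‖_TV + ∫|α_μ(y) − α_ν(y)| ψ(dy) ≤ (2 − δ(Q))·‖μ−ν‖_TV, where δ(Q) is the Dobrushin coefficient of the channel Q(dy|x) = h(x,y)ψ(dy), i.e., ‖Qμ−Qν‖_TV ≤ (1−δ(Q))‖μ−ν‖_TV holds. -/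
/-!
Fix a Hahn set `s` of `μ - ν`, so that `∫ w d|μ - ν| = ∫_s w d(μ - ν) + ∫_{sᶜ} w d(ν - μ)`
and `‖μ - ν‖ = |μ - ν|(X)`. For fixed `y`, put `A = ∫ h(·,y) f dμ` and `B = ∫ h(·,y) f dν`
for a test function `|f| ≤ 1`. Since `|B| ≤ α_ν(y)`,
`α_μ |A / α_μ - B / α_ν| ≤ |A - B| + |α_μ - α_ν| ≤ ∫ h(x,y) |μ - ν|(dx) + |α_μ - α_ν|`.
Integrating in `y`, Fubini and `∫ h(x,y) ψ(dy) = 1` turn the first term into `‖μ - ν‖`.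
The second inequality is the Dobrushin bound, because `∫ |α_μ - α_ν| dψ ≤ ‖Qμ - Qν‖`.
-/

open MeasureTheory

/-- Total variation distance: `sup` over measurable `f` with `‖f‖_∞ ≤ 1` of
`|∫ f dμ - ∫ f dν|`. -/
noncomputable def tvDist {X : Type*} [MeasurableSpace X]
    (μ ν : Measure X) : ℝ :=
  sSup {r : ℝ | ∃ f : X → ℝ, Measurable f ∧ (∀ x, |f x| ≤ 1) ∧
    r = |(∫ x, f x ∂μ) - (∫ x, f x ∂ν)|}

/-- The output distribution of the channel with density `h` w.r.t. `ψ`. -/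
noncomputable def channelOut {X Y : Type*} [MeasurableSpace X] [MeasurableSpace Y]
    (ψ : Measure Y) (h : X → Y → ℝ) (μ : Measure X) : Measure Y :=
  ψ.withDensity (fun y => ENNReal.ofReal (∫ x, h x y ∂μ))

/-- Bayesian posterior `μ^y(dx) = h(x,y) μ(dx) / α_μ(y)`. -/
noncomputable def posterior {X Y : Type*} [MeasurableSpace X] [MeasurableSpace Y]
    (h : X → Y → ℝ) (μ : Measure X) (y : Y) : Measure X :=
  (ENNReal.ofReal (∫ x, h x y ∂μ))⁻¹ • μ.withDensity (fun x => ENNReal.ofReal (h x y))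

section TotalVariation

variable {X : Type*} [MeasurableSpace X]

theorem tvDist_nonneg (μ ν : Measure X) : 0 ≤ tvDist μ ν :=
  Real.sSup_nonneg <| by rintro _ ⟨f, -, -, rfl⟩; exact abs_nonneg _

theorem tvDist_le_of_forall {μ ν : Measure X} {a : ℝ}
    (H : ∀ f : X → ℝ, Measurable f → (∀ x, |f x| ≤ 1) → |∫ x, f x ∂μ - ∫ x, f x ∂ν| ≤ a) :
    tvDist μ ν ≤ a :=
  csSup_le ⟨_, 0, measurable_const, by simp, rfl⟩ <| by
    rintro _ ⟨f, hf, hf1, rfl⟩; exact H f hf hf1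

theorem abs_integral_sub_le_tvDist (μ ν : Measure X) [IsFiniteMeasure μ] [IsFiniteMeasure ν]
    {f : X → ℝ} (hf : Measurable f) (hf1 : ∀ x, |f x| ≤ 1) :
    |∫ x, f x ∂μ - ∫ x, f x ∂ν| ≤ tvDist μ ν := by
  refine le_csSup ⟨μ.real Set.univ + ν.real Set.univ, ?_⟩ ⟨f, hf, hf1, rfl⟩
  rintro _ ⟨g, -, hg1, rfl⟩
  have hg : ∀ (ρ : Measure X) [IsFiniteMeasure ρ], |∫ x, g x ∂ρ| ≤ ρ.real Set.univ := fun ρ _ => by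
    simpa using norm_integral_le_of_norm_le_const (μ := ρ) (f := g) (C := 1) (ae_of_all _ hg1)
  exact (abs_sub _ _).trans (add_le_add (hg μ) (hg ν))

theorem integral_withDensity_ofReal {ρ : Measure X} {p : X → ℝ} (hp : Measurable p)
    (hp0 : ∀ x, 0 ≤ p x) (f : X → ℝ) :
    ∫ x, f x ∂ρ.withDensity (fun x => ENNReal.ofReal (p x)) = ∫ x, p x * f x ∂ρ := by
  rw [integral_withDensity_eq_integral_toReal_smul hp.ennreal_ofReal
    (ae_of_all _ fun _ => ENNReal.ofReal_lt_top)]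
  simp [ENNReal.toReal_ofReal (hp0 _)]

theorem integral_abs_sub_le_tvDist_withDensity {ψ : Measure X} {p q : X → ℝ}
    (hp : Measurable p) (hq : Measurable q) (hp0 : ∀ x, 0 ≤ p x) (hq0 : ∀ x, 0 ≤ q x)
    (hpi : Integrable p ψ) (hqi : Integrable q ψ) :
    ∫ x, |p x - q x| ∂ψ ≤
      tvDist (ψ.withDensity fun x => ENNReal.ofReal (p x))
        (ψ.withDensity fun x => ENNReal.ofReal (q x)) := by
  have := isFiniteMeasure_withDensity_ofReal hpi.2
  have := isFiniteMeasure_withDensity_ofReal hqi.2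
  set sign : X → ℝ := fun x => if q x ≤ p x then 1 else -1
  have hsign : Measurable sign :=
    Measurable.ite (measurableSet_le hq hp) measurable_const measurable_const
  have hsign1 : ∀ x, |sign x| ≤ 1 := fun x => by by_cases hx : q x ≤ p x <;> simp [sign, hx]
  have hmul : ∀ x, |p x - q x| = p x * sign x - q x * sign x := fun x => by
    by_cases hx : q x ≤ p x
    · simp [sign, hx, abs_of_nonneg (sub_nonneg.2 hx)]
    · simp [sign, hx, abs_of_neg (sub_neg.2 (not_le.1 hx))]
      ring
  have hbdd : ∀ᵐ x ∂ψ, ‖sign x‖ ≤ 1 := ae_of_all _ hsign1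
  calc ∫ x, |p x - q x| ∂ψ = ∫ x, p x * sign x ∂ψ - ∫ x, q x * sign x ∂ψ := by
        simp_rw [hmul]
        exact integral_sub (hpi.mul_bdd hsign.aestronglyMeasurable hbdd)
          (hqi.mul_bdd hsign.aestronglyMeasurable hbdd)
    _ ≤ _ := by
      rw [← integral_withDensity_ofReal hp hp0, ← integral_withDensity_ofReal hq hq0]
      exact (le_abs_self _).trans (abs_integral_sub_le_tvDist _ _ hsign hsign1)

end TotalVariation

section Variation

variable {X : Type*} [MeasurableSpace X]

/-- `∫ w d|μ - ν|`, when `s` is a Hahn set of `μ - ν`. -/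
noncomputable def varIntegral (μ ν : Measure X) (s : Set X) (w : X → ℝ) : ℝ :=
  (∫ x in s, w x ∂μ - ∫ x in s, w x ∂ν) + (∫ x in sᶜ, w x ∂ν - ∫ x in sᶜ, w x ∂μ)

theorem exists_restrict_le_restrict_compl (μ ν : Measure X) [IsFiniteMeasure μ]
    [IsFiniteMeasure ν] :
    ∃ s, MeasurableSet s ∧ ν.restrict s ≤ μ.restrict s ∧ μ.restrict sᶜ ≤ ν.restrict sᶜ := by
  obtain ⟨s, hs, hνμ, hμν⟩ := hahn_decomposition μ ν
  refine ⟨s, hs, Measure.le_iff.2 fun t ht => ?_, Measure.le_iff.2 fun t ht => ?_⟩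
  · rw [Measure.restrict_apply ht, Measure.restrict_apply ht]
    exact hνμ _ (ht.inter hs) Set.inter_subset_right
  · rw [Measure.restrict_apply ht, Measure.restrict_apply ht]
    exact hμν _ (ht.inter hs.compl) Set.inter_subset_right

theorem abs_integral_sub_le_of_le {a b : Measure X} (hab : a ≤ b) {f w : X → ℝ}
    (hfw : ∀ x, |f x| ≤ w x) (hf : Integrable f b) (hw : Integrable w b) :
    |∫ x, f x ∂b - ∫ x, f x ∂a| ≤ ∫ x, w x ∂b - ∫ x, w x ∂a := by
  have hfa := hf.mono_measure hab
  have hwa := hw.mono_measure hab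
  have hsub := integral_mono_measure hab
    (ae_of_all _ fun x => sub_nonneg.2 (abs_le.1 (hfw x)).2) (hw.sub hf)
  have hadd := integral_mono_measure hab
    (ae_of_all _ fun x => neg_le_iff_add_nonneg.1 (abs_le.1 (hfw x)).1) (hf.add hw)
  rw [integral_sub hwa hfa, integral_sub hw hf] at hsub
  rw [integral_add hfa hwa, integral_add hf hw] at hadd
  exact abs_le.2 ⟨by linarith, by linarith⟩

variable {μ ν : Measure X} {s : Set X}

theorem abs_integral_sub_le_varIntegral (hs : MeasurableSet s)
    (hνμ : ν.restrict s ≤ μ.restrict s) (hμν : μ.restrict sᶜ ≤ ν.restrict sᶜ)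
    {f w : X → ℝ} (hfw : ∀ x, |f x| ≤ w x) (hf : Measurable f)
    (hwμ : Integrable w μ) (hwν : Integrable w ν) :
    |∫ x, f x ∂μ - ∫ x, f x ∂ν| ≤ varIntegral μ ν s w := by
  have hfμ : Integrable f μ := hwμ.mono' hf.aestronglyMeasurable (ae_of_all _ hfw)
  have hfν : Integrable f ν := hwν.mono' hf.aestronglyMeasurable (ae_of_all _ hfw)
  have hs₁ := abs_integral_sub_le_of_le hνμ hfw hfμ.restrict hwμ.restrict
  have hs₂ := abs_integral_sub_le_of_le hμν hfw hfν.restrict hwν.restrict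
  rw [← integral_add_compl hs hfμ, ← integral_add_compl hs hfν]
  calc _ = |(∫ x in s, f x ∂μ - ∫ x in s, f x ∂ν) - (∫ x in sᶜ, f x ∂ν - ∫ x in sᶜ, f x ∂μ)| := by
        ring_nf
    _ ≤ _ := (abs_sub _ _).trans (add_le_add hs₁ hs₂)

theorem tvDist_eq_varIntegral_one [IsFiniteMeasure μ] [IsFiniteMeasure ν] (hs : MeasurableSet s)
    (hνμ : ν.restrict s ≤ μ.restrict s) (hμν : μ.restrict sᶜ ≤ ν.restrict sᶜ) :
    tvDist μ ν = varIntegral μ ν s 1 := by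
  classical
  refine le_antisymm (tvDist_le_of_forall fun f hf hf1 =>
    abs_integral_sub_le_varIntegral hs hνμ hμν hf1 hf (integrable_const 1) (integrable_const 1)) ?_
  set sign : X → ℝ := s.piecewise (fun _ => 1) (fun _ => -1)
  have hsign : Measurable sign := measurable_const.piecewise hs measurable_const
  have hsign1 : ∀ x, |sign x| ≤ 1 := fun x => by
    by_cases hx : x ∈ s <;> simp [sign, hx]
  have hint : ∀ (ρ : Measure X) [IsFiniteMeasure ρ],
      ∫ x, sign x ∂ρ = ∫ x in s, (1 : ℝ) ∂ρ - ∫ x in sᶜ, (1 : ℝ) ∂ρ := fun ρ _ => by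
    rw [← integral_add_compl hs ((integrable_const 1).mono' hsign.aestronglyMeasurable
        (ae_of_all _ hsign1)), setIntegral_congr_fun hs (Set.piecewise_eqOn s _ _),
      setIntegral_congr_fun hs.compl (Set.piecewise_eqOn_compl s _ _), integral_neg, sub_eq_add_neg]
  calc varIntegral μ ν s 1 = ∫ x, sign x ∂μ - ∫ x, sign x ∂ν := by
        rw [hint μ, hint ν, varIntegral]; simp only [Pi.one_apply]; ring
    _ ≤ _ := (le_abs_self _).trans (abs_integral_sub_le_tvDist μ ν hsign hsign1)

end Variation

section Posterior

variable {X Y : Type*} [MeasurableSpace X] [MeasurableSpace Y]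

theorem integral_posterior {h : X → Y → ℝ} {y : Y} (hy : Measurable fun x => h x y)
    (h0 : ∀ x, 0 ≤ h x y) (ρ : Measure X) (f : X → ℝ) :
    ∫ x, f x ∂posterior h ρ y = (∫ x, h x y ∂ρ)⁻¹ * ∫ x, h x y * f x ∂ρ := by
  rw [posterior, integral_smul_measure, integral_withDensity_ofReal hy h0, ENNReal.toReal_inv,
    ENNReal.toReal_ofReal (integral_nonneg h0), smul_eq_mul]

theorem mul_abs_inv_mul_sub_inv_mul_le {a b A B : ℝ} (ha : 0 < a) (hb : 0 < b) (hB : |B| ≤ b) :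
    a * |a⁻¹ * A - b⁻¹ * B| ≤ |A - B| + |a - b| := by
  calc a * |a⁻¹ * A - b⁻¹ * B| = |(A - B) + (b - a) * (B / b)| := by
        rw [← abs_of_pos ha, ← abs_mul, abs_of_pos ha]; congr 1; field_simp; ring
    _ ≤ |A - B| + |b - a| * |B / b| := (abs_add_le _ _).trans_eq (by rw [abs_mul])
    _ ≤ |A - B| + |a - b| := by
        rw [abs_sub_comm b a]
        gcongr
        exact mul_le_of_le_one_right (abs_nonneg _)
          (by rwa [abs_div, abs_of_pos hb, div_le_one hb])

theorem tvDist_posterior_mul_le {μ ν : Measure X} {s : Set X} (hs : MeasurableSet s)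
    (hνμ : ν.restrict s ≤ μ.restrict s) (hμν : μ.restrict sᶜ ≤ ν.restrict sᶜ)
    {h : X → Y → ℝ} {y : Y} (hy : Measurable fun x => h x y) (h0 : ∀ x, 0 ≤ h x y)
    (hμ : Integrable (fun x => h x y) μ) (hν : Integrable (fun x => h x y) ν)
    (hαμ : 0 < ∫ x, h x y ∂μ) (hαν : 0 < ∫ x, h x y ∂ν) :
    tvDist (posterior h μ y) (posterior h ν y) * ∫ x, h x y ∂μ ≤
      varIntegral μ ν s (fun x => h x y) + |∫ x, h x y ∂μ - ∫ x, h x y ∂ν| := by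
  rw [← le_div_iff₀ hαμ]
  refine tvDist_le_of_forall fun f hf hf1 => ?_
  have hhf : ∀ x, |h x y * f x| ≤ h x y := fun x => by
    rw [abs_mul, abs_of_nonneg (h0 x)]
    exact mul_le_of_le_one_right (h0 x) (hf1 x)
  have hν_bound : |∫ x, h x y * f x ∂ν| ≤ ∫ x, h x y ∂ν :=
    norm_integral_le_of_norm_le (f := fun x => h x y * f x) hν (ae_of_all _ hhf)
  rw [integral_posterior hy h0, integral_posterior hy h0, le_div_iff₀' hαμ]
  exact (mul_abs_inv_mul_sub_inv_mul_le hαμ hαν hν_bound).trans (add_le_add_left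
    (abs_integral_sub_le_varIntegral hs hνμ hμν hhf (hy.mul hf) hμ hν) _)

end Posterior

section Kernel

variable {X Y : Type*} [MeasurableSpace X] [MeasurableSpace Y] {ψ : Measure Y} [SigmaFinite ψ]
  {h : X → Y → ℝ}

theorem integrable_uncurry_of_integral_eq_one (hm : Measurable (Function.uncurry h))
    (h0 : ∀ x y, 0 ≤ h x y) (h1 : ∀ x, ∫ y, h x y ∂ψ = 1) (ρ : Measure X) [IsFiniteMeasure ρ] :
    Integrable (Function.uncurry h) (ρ.prod ψ) := by
  refine (integrable_prod_iff hm.aestronglyMeasurable).2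
    ⟨ae_of_all _ fun x => Integrable.of_integral_ne_zero (by simp [h1 x]), ?_⟩
  simp [Real.norm_eq_abs, abs_of_nonneg (h0 _ _), h1]

theorem integrable_integral_of_integral_eq_one (hm : Measurable (Function.uncurry h))
    (h0 : ∀ x y, 0 ≤ h x y) (h1 : ∀ x, ∫ y, h x y ∂ψ = 1) (ρ : Measure X) [IsFiniteMeasure ρ] :
    Integrable (fun y => ∫ x, h x y ∂ρ) ψ :=
  (integrable_uncurry_of_integral_eq_one hm h0 h1 ρ).integral_prod_right

theorem integral_integral_eq_measureReal_univ (hm : Measurable (Function.uncurry h))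
    (h0 : ∀ x y, 0 ≤ h x y) (h1 : ∀ x, ∫ y, h x y ∂ψ = 1) (ρ : Measure X) [IsFiniteMeasure ρ] :
    ∫ y, ∫ x, h x y ∂ρ ∂ψ = ρ.real Set.univ := by
  rw [← integral_integral_swap (integrable_uncurry_of_integral_eq_one hm h0 h1 ρ)]
  simp [h1]

theorem integrable_varIntegral (hm : Measurable (Function.uncurry h)) (h0 : ∀ x y, 0 ≤ h x y)
    (h1 : ∀ x, ∫ y, h x y ∂ψ = 1) (μ ν : Measure X) [IsFiniteMeasure μ] [IsFiniteMeasure ν]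
    (s : Set X) :
    Integrable (fun y => varIntegral μ ν s (fun x => h x y)) ψ := by
  have hI := fun (ρ : Measure X) [IsFiniteMeasure ρ] =>
    integrable_integral_of_integral_eq_one hm h0 h1 ρ
  exact ((hI _).sub (hI _)).add ((hI _).sub (hI _))

theorem integral_varIntegral (hm : Measurable (Function.uncurry h)) (h0 : ∀ x y, 0 ≤ h x y)
    (h1 : ∀ x, ∫ y, h x y ∂ψ = 1) (μ ν : Measure X) [IsFiniteMeasure μ] [IsFiniteMeasure ν]
    (s : Set X) :
    ∫ y, varIntegral μ ν s (fun x => h x y) ∂ψ = varIntegral μ ν s 1 := by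
  have hI := fun (ρ : Measure X) [IsFiniteMeasure ρ] =>
    integrable_integral_of_integral_eq_one hm h0 h1 ρ
  simp only [varIntegral]
  rw [integral_add, integral_sub, integral_sub]
  · simp [integral_integral_eq_measureReal_univ hm h0 h1]
  all_goals first | exact hI _ | exact (hI _).sub (hI _)

theorem ae_tvDist_posterior_mul_le (hm : Measurable (Function.uncurry h))
    (h0 : ∀ x y, 0 ≤ h x y) (h1 : ∀ x, ∫ y, h x y ∂ψ = 1) {μ ν : Measure X} [IsFiniteMeasure μ]
    [IsFiniteMeasure ν] {s : Set X} (hs : MeasurableSet s) (hνμ : ν.restrict s ≤ μ.restrict s)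
    (hμν : μ.restrict sᶜ ≤ ν.restrict sᶜ)
    (hpos : ∀ᵐ y ∂ψ, 0 < (∫ x, h x y ∂μ) ∧ 0 < (∫ x, h x y ∂ν)) :
    ∀ᵐ y ∂ψ, tvDist (posterior h μ y) (posterior h ν y) * ∫ x, h x y ∂μ ≤
      varIntegral μ ν s (fun x => h x y) + |∫ x, h x y ∂μ - ∫ x, h x y ∂ν| := by
  filter_upwards [hpos, (integrable_uncurry_of_integral_eq_one hm h0 h1 μ).prod_left_ae,
    (integrable_uncurry_of_integral_eq_one hm h0 h1 ν).prod_left_ae] with y ⟨hyμ, hyν⟩ hiμ hiν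
  exact tvDist_posterior_mul_le hs hνμ hμν (hm.comp measurable_prodMk_right) (h0 · y) hiμ hiν
    hyμ hyν

end Kernel

theorem stmt_12_general {X Y : Type*} [MeasurableSpace X]
    [MeasurableSpace Y]
    (ψ : Measure Y) [SigmaFinite ψ]
    (h : X → Y → ℝ) (hm : Measurable (Function.uncurry h))
    (h0 : ∀ x y, 0 ≤ h x y) (h1 : ∀ x, ∫ y, h x y ∂ψ = 1)
    (μ ν : Measure X) [IsProbabilityMeasure μ] [IsProbabilityMeasure ν]
    (hpos : ∀ᵐ y ∂ψ, 0 < (∫ x, h x y ∂μ) ∧ 0 < (∫ x, h x y ∂ν))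
    (δ : ℝ)
    (hDob : ∀ ρ₁ ρ₂ : Measure X, IsProbabilityMeasure ρ₁ → IsProbabilityMeasure ρ₂ →
      tvDist (channelOut ψ h ρ₁) (channelOut ψ h ρ₂) ≤ (1 - δ) * tvDist ρ₁ ρ₂) :
    (∫ y, tvDist (posterior h μ y) (posterior h ν y) * (∫ x, h x y ∂μ) ∂ψ) ≤
      tvDist μ ν + (∫ y, |(∫ x, h x y ∂μ) - (∫ x, h x y ∂ν)| ∂ψ) ∧
    tvDist μ ν + (∫ y, |(∫ x, h x y ∂μ) - (∫ x, h x y ∂ν)| ∂ψ) ≤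
      (2 - δ) * tvDist μ ν := by
  obtain ⟨s, hs, hνμ, hμν⟩ := exists_restrict_le_restrict_compl μ ν
  have hαμ := integrable_integral_of_integral_eq_one hm h0 h1 μ
  have hαν := integrable_integral_of_integral_eq_one hm h0 h1 ν
  have hαdiff : Integrable (fun y => |∫ x, h x y ∂μ - ∫ x, h x y ∂ν|) ψ := (hαμ.sub hαν).abs
  have hα0 : ∀ (ρ : Measure X) y, 0 ≤ ∫ x, h x y ∂ρ := fun ρ y => integral_nonneg (h0 · y)
  have hα_meas : ∀ (ρ : Measure X) [SFinite ρ], Measurable fun y => ∫ x, h x y ∂ρ := fun ρ _ =>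
    hm.stronglyMeasurable.integral_prod_left'.measurable
  have hchannel : ∫ y, |∫ x, h x y ∂μ - ∫ x, h x y ∂ν| ∂ψ ≤ (1 - δ) * tvDist μ ν :=
    (integral_abs_sub_le_tvDist_withDensity (hα_meas μ) (hα_meas ν) (hα0 μ) (hα0 ν) hαμ
      hαν).trans (hDob μ ν ‹_› ‹_›)
  have hvar : ∫ y, varIntegral μ ν s (fun x => h x y) ∂ψ = tvDist μ ν := by
    rw [integral_varIntegral hm h0 h1, tvDist_eq_varIntegral_one hs hνμ hμν]
  refine ⟨?_, by linarith⟩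
  calc _ ≤ ∫ y, varIntegral μ ν s (fun x => h x y) + |∫ x, h x y ∂μ - ∫ x, h x y ∂ν| ∂ψ :=
        integral_mono_of_nonneg (ae_of_all _ fun y => mul_nonneg (tvDist_nonneg _ _) (hα0 μ y))
          ((integrable_varIntegral hm h0 h1 μ ν s).add hαdiff)
          (ae_tvDist_posterior_mul_le hm h0 h1 hs hνμ hμν hpos)
    _ = _ := by rw [integral_add (integrable_varIntegral hm h0 h1 μ ν s) hαdiff, hvar]

theorem stmt_12 {X Y : Type*} [MeasurableSpace X] [StandardBorelSpace X]
    [MeasurableSpace Y] [StandardBorelSpace Y]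
    (ψ : Measure Y) [SigmaFinite ψ]
    (h : X → Y → ℝ) (hm : Measurable (Function.uncurry h))
    (h0 : ∀ x y, 0 ≤ h x y) (h1 : ∀ x, ∫ y, h x y ∂ψ = 1)
    (μ ν : Measure X) [IsProbabilityMeasure μ] [IsProbabilityMeasure ν]
    (hpos : ∀ᵐ y ∂ψ, 0 < (∫ x, h x y ∂μ) ∧ 0 < (∫ x, h x y ∂ν))
    (δ : ℝ) (hδ0 : 0 ≤ δ) (hδ1 : δ ≤ 1)
    (hDob : ∀ ρ₁ ρ₂ : Measure X, IsProbabilityMeasure ρ₁ → IsProbabilityMeasure ρ₂ →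
      tvDist (channelOut ψ h ρ₁) (channelOut ψ h ρ₂) ≤ (1 - δ) * tvDist ρ₁ ρ₂) :
    (∫ y, tvDist (posterior h μ y) (posterior h ν y) * (∫ x, h x y ∂μ) ∂ψ) ≤
      tvDist μ ν + (∫ y, |(∫ x, h x y ∂μ) - (∫ x, h x y ∂ν)| ∂ψ) ∧
    tvDist μ ν + (∫ y, |(∫ x, h x y ∂μ) - (∫ x, h x y ∂ν)| ∂ψ) ≤
      (2 - δ) * tvDist μ ν :=
  stmt_12_general ψ h hm h0 h1 μ ν hpos δ hDob
end

section
/- Fix a contraction factor β ∈ (0,1) and a bounded function r on a set S × A with A finite. If two bounded functions V₁, V₂ : S → ℝ satisfy the fixed-point equations V_i(s) = min_{a∈A} [ r_i(s,a) + β·(P_i V_i)(s,a) ] for bounded operators P_i with ‖P_i f‖_∞ ≤ ‖f‖_∞ (expectation operators), then ‖V₁ − V₂‖_∞ ≤ (1/(1−β)) · [ sup_{s,a}|r₁(s,a) − r₂(s,a)| + β·sup_{s,a}|(P₁V₂)(s,a) − (P₂V₂)(s,a)| ]. -/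
/-!
Minima over a finite set are 1-Lipschitz in the sup norm, and `P₁` does not increase it, so
if `M` bounds `|V₁ - V₂|` then one Bellman step shows that `Dr + β * DP + β * M` bounds it too.
Applying this to the supremum `M` of `|V₁ - V₂|` and solving for `M` gives the estimate.
-/

open Set

lemma abs_ciInf_sub_ciInf_le {ι : Type*} [Finite ι] [Nonempty ι] {f g : ι → ℝ} {c : ℝ}
    (h : ∀ i, |f i - g i| ≤ c) : |(⨅ i, f i) - ⨅ i, g i| ≤ c := by
  obtain ⟨i, hi⟩ := Finite.exists_min f
  obtain ⟨j, hj⟩ := Finite.exists_min g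
  have hf : ⨅ k, f k = f i := le_antisymm (ciInf_le (Finite.bddBelow_range f) i) (le_ciInf hi)
  have hg : ⨅ k, g k = g j := le_antisymm (ciInf_le (Finite.bddBelow_range g) j) (le_ciInf hj)
  rw [hf, hg, abs_le]
  have hfg := abs_le.mp (h j)
  have hgf := abs_le.mp (h i)
  constructor <;> linarith [hi j, hj i]

lemma abs_add_mul_sub_add_mul_le {x₁ x₂ y₁ y₂ β a b : ℝ} (hβ : 0 ≤ β)
    (hx : |x₁ - x₂| ≤ a) (hy : |y₁ - y₂| ≤ b) :
    |x₁ + β * y₁ - (x₂ + β * y₂)| ≤ a + β * b :=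
  calc |x₁ + β * y₁ - (x₂ + β * y₂)| = |(x₁ - x₂) + β * (y₁ - y₂)| := by ring_nf
    _ ≤ |x₁ - x₂| + β * |y₁ - y₂| := by
      rw [← abs_of_nonneg hβ, ← abs_mul, abs_of_nonneg hβ]; exact abs_add_le _ _
    _ ≤ a + β * b := by gcongr

lemma abs_apply_sub_apply_le {X Y Z : Type*} {P : (X → ℝ) → Y → Z → ℝ}
    (hlin : IsLinearMap ℝ P)
    (hnorm : ∀ (f : X → ℝ) (C : ℝ), (∀ x, |f x| ≤ C) → ∀ y z, |P f y z| ≤ C)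
    {f g : X → ℝ} {C : ℝ} (h : ∀ x, |f x - g x| ≤ C) (y : Y) (z : Z) :
    |P f y z - P g y z| ≤ C := by
  have : P f y z - P g y z = P (f - g) y z := by rw [hlin.map_sub]; rfl
  rw [this]
  exact hnorm (f - g) C h y z

lemma le_div_one_sub_of_forall_le_add_mul {X : Type*} {d : X → ℝ} {β c : ℝ} (hβ : β < 1)
    (hbdd : BddAbove (range d)) (h : ∀ M, (∀ x, d x ≤ M) → ∀ x, d x ≤ c + β * M) (x : X) :
    d x ≤ c / (1 - β) := by
  have : Nonempty X := ⟨x⟩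
  have hsup : ⨆ y, d y ≤ c + β * ⨆ y, d y := ciSup_le (h _ (le_ciSup hbdd))
  rw [le_div_iff₀ (by linarith)]
  nlinarith [le_ciSup hbdd x]

theorem stmt_16_general {S A : Type*} [Fintype A] [Nonempty A]
    (β : ℝ) (hβ0 : 0 < β) (hβ1 : β < 1)
    (r₁ r₂ : S → A → ℝ)
    (P₁ P₂ : (S → ℝ) → S → A → ℝ)
    (hP₁lin : IsLinearMap ℝ P₁)
    (hP₁norm : ∀ (f : S → ℝ) (C : ℝ), (∀ s, |f s| ≤ C) → ∀ s a, |P₁ f s a| ≤ C)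
    (V₁ V₂ : S → ℝ)
    (hV₁bdd : ∃ C, ∀ s, |V₁ s| ≤ C) (hV₂bdd : ∃ C, ∀ s, |V₂ s| ≤ C)
    (hV₁ : ∀ s, V₁ s = ⨅ a : A, (r₁ s a + β * P₁ V₁ s a))
    (hV₂ : ∀ s, V₂ s = ⨅ a : A, (r₂ s a + β * P₂ V₂ s a))
    (Dr DP : ℝ)
    (hDr : ∀ s a, |r₁ s a - r₂ s a| ≤ Dr)
    (hDP : ∀ s a, |P₁ V₂ s a - P₂ V₂ s a| ≤ DP) :
    ∀ s, |V₁ s - V₂ s| ≤ (1 / (1 - β)) * (Dr + β * DP) := by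
  obtain ⟨C₁, hC₁⟩ := hV₁bdd
  obtain ⟨C₂, hC₂⟩ := hV₂bdd
  have hbdd : BddAbove (range fun s => |V₁ s - V₂ s|) := by
    refine ⟨C₁ + C₂, ?_⟩
    rintro _ ⟨s, rfl⟩
    exact (abs_sub _ _).trans (add_le_add (hC₁ s) (hC₂ s))
  have hstep : ∀ M, (∀ s, |V₁ s - V₂ s| ≤ M) → ∀ s, |V₁ s - V₂ s| ≤ Dr + β * DP + β * M := by
    intro M hM s
    rw [hV₁ s, hV₂ s]
    refine abs_ciInf_sub_ciInf_le fun a => ?_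
    have hP : |P₁ V₁ s a - P₂ V₂ s a| ≤ M + DP :=
      (abs_sub_le _ _ _).trans
        (add_le_add (abs_apply_sub_apply_le hP₁lin hP₁norm hM s a)
          (hDP s a))
    calc _ ≤ Dr + β * (M + DP) := abs_add_mul_sub_add_mul_le hβ0.le (hDr s a) hP
      _ = Dr + β * DP + β * M := by ring
  intro s
  rw [one_div_mul_eq_div]
  exact le_div_one_sub_of_forall_le_add_mul hβ1 hbdd hstep s

/-- Comparison of fixed points of two Bellman operators: if `V i` is the fixed
point of `V ↦ min_a (r i (·,a) + β · (P i V)(·,a))` with expectation operators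
`P i` of norm at most one, then `‖V₁ - V₂‖_∞` is controlled by the mismatch of
the costs and of the transition operators. -/
theorem stmt_16 {S A : Type*} [Fintype A] [Nonempty A]
    (β : ℝ) (hβ0 : 0 < β) (hβ1 : β < 1)
    (r₁ r₂ : S → A → ℝ)
    (hr₁ : ∃ C, ∀ s a, |r₁ s a| ≤ C) (hr₂ : ∃ C, ∀ s a, |r₂ s a| ≤ C)
    (P₁ P₂ : (S → ℝ) → S → A → ℝ)
    (hP₁lin : IsLinearMap ℝ P₁) (hP₂lin : IsLinearMap ℝ P₂)
    (hP₁pos : ∀ f : S → ℝ, (∀ s, 0 ≤ f s) → ∀ s a, 0 ≤ P₁ f s a)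
    (hP₂pos : ∀ f : S → ℝ, (∀ s, 0 ≤ f s) → ∀ s a, 0 ≤ P₂ f s a)
    (hP₁norm : ∀ (f : S → ℝ) (C : ℝ), (∀ s, |f s| ≤ C) → ∀ s a, |P₁ f s a| ≤ C)
    (hP₂norm : ∀ (f : S → ℝ) (C : ℝ), (∀ s, |f s| ≤ C) → ∀ s a, |P₂ f s a| ≤ C)
    (V₁ V₂ : S → ℝ)
    (hV₁bdd : ∃ C, ∀ s, |V₁ s| ≤ C) (hV₂bdd : ∃ C, ∀ s, |V₂ s| ≤ C)
    (hV₁ : ∀ s, V₁ s = ⨅ a : A, (r₁ s a + β * P₁ V₁ s a))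
    (hV₂ : ∀ s, V₂ s = ⨅ a : A, (r₂ s a + β * P₂ V₂ s a))
    (Dr DP : ℝ)
    (hDr : ∀ s a, |r₁ s a - r₂ s a| ≤ Dr)
    (hDP : ∀ s a, |P₁ V₂ s a - P₂ V₂ s a| ≤ DP) :
    ∀ s, |V₁ s - V₂ s| ≤ (1 / (1 - β)) * (Dr + β * DP) :=
  stmt_16_general β hβ0 hβ1 r₁ r₂ P₁ P₂ hP₁lin hP₁norm V₁ V₂ hV₁bdd hV₂bdd hV₁ hV₂ Dr DP hDr hDP
end
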